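/- For all integers p ≥ 1 and n ≥ 1, A(p,n,1) = (n−1)! · B(p,n). -/

import Mathlib

/-!
A commuting `p`-tuple of permutations of `[n]` is the same as an action of `ℤ^p` on `[n]`, and the
tuple generates a transitive group exactly when this action is transitive. Transitive actions of
a group `G` on `[n]` correspond to pairs made of a subgroup `H` of index `n` (the stabilizer of a
fixed point `e`) and a bijection `G ⧸ H ≃ [n]` sending the trivial coset to `e`; hence there are
`(n-1)!` times as many of them as subgroups of index `n`.

A subgroup `L` of index `n` in `ℤ × V` meets `V` in a subgroup `M` of index `s ∣ n`, and the `L`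
lying over a given `M` are parametrized by `V ⧸ M`. So the number of subgroups of index `n` of
`ℤ^(q+1)` is `∑_{s ∣ n} s · #{M ≤ ℤ^q | [ℤ^q : M] = s}`, which is the recursion satisfied by
`B` when the last term of the divisor chain is split off.
-/

/-- `A p n k` is the number of `p`-tuples of pairwise commuting permutations of
`{1,…,n}` whose generated subgroup acts on `{1,…,n}` with exactly `k` orbits. -/
noncomputable def A (p n k : ℕ) : ℕ :=
  Nat.card {σ : Fin p → Equiv.Perm (Fin n) //
    (∀ i j, Commute (σ i) (σ j)) ∧
    Nat.card (MulAction.orbitRel.Quotient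
      (Subgroup.closure (Set.range σ)) (Fin n)) = k}

/-- `B p n = Σ_{s₁ | s₂ | ⋯ | s_{p-1} | n} s₁⋯s_{p-1}`, the sum over `(p-1)`-tuples of
positive integers forming a divisibility chain ending at `n`, of their product. -/
def B (p n : ℕ) : ℕ :=
  ∑ s ∈ Finset.filter
      (fun s : Fin (p - 1) → ℕ =>
        ∀ i : Fin (p - 1),
          s i ∣ if h : i.val + 1 < p - 1 then s ⟨i.val + 1, h⟩ else n)
      (Fintype.piFinset fun _ => n.divisors),
    ∏ i, s i

open MulAction Equiv AddSubgroup

lemma Nat.card_eq_card_mul_of_fiber_equiv {α β C : Type*} (f : α → β)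
    (e : ∀ b, Nonempty ({a // f a = b} ≃ C)) : Nat.card α = Nat.card β * Nat.card C := by
  rw [← Nat.card_prod]
  exact Nat.card_congr ((Equiv.sigmaFiberEquiv f).symm.trans
    ((Equiv.sigmaCongrRight fun b => (e b).some).trans (Equiv.sigmaEquivProd β C)))

lemma Equiv.Perm.card_fixing {α : Type*} [Finite α] (e : α) :
    Nat.card {π : Perm α // π e = e} = (Nat.card α - 1).factorial := by
  classical
  have := Fintype.ofFinite α
  rw [← Nat.card_congr ((Perm.subtypeEquivSubtypePerm (· ≠ e)).trans
    (subtypeEquivRight fun π => by simp)), Nat.card_perm]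
  simp [Nat.card_eq_fintype_card]

section TransitiveHom

variable {G α : Type*} [Group G]

lemma mem_comap_stabilizer_iff {φ : G →* Perm α} {e : α} {g : G} :
    g ∈ (stabilizer (Perm α) e).comap φ ↔ φ g e = e := Iff.rfl

noncomputable def quotientEquivOfComapStabilizerEq (φ : G →* Perm α) {e : α} {H : Subgroup G}
    (hH : (stabilizer (Perm α) e).comap φ = H) (htrans : ∀ x, ∃ g, φ g e = x) :
    G ⧸ H ≃ α := by
  have key : ∀ a b : G, φ a e = φ b e ↔ a⁻¹ * b ∈ H := fun a b => by
    rw [← hH, mem_comap_stabilizer_iff, map_mul, map_inv, Perm.mul_apply, Perm.inv_eq_iff_eq,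
      eq_comm]
  refine Equiv.ofBijective (Quotient.lift (fun g => φ g e) fun a b hab => ?_) ⟨?_, ?_⟩
  · exact (key a b).mpr (QuotientGroup.leftRel_apply.mp hab)
  · rintro ⟨a⟩ ⟨b⟩ hab
    exact QuotientGroup.eq.mpr ((key a b).mp hab)
  · intro x
    obtain ⟨g, rfl⟩ := htrans x
    exact ⟨g, rfl⟩

lemma quotientEquivOfComapStabilizerEq_mk (φ : G →* Perm α) {e : α} {H : Subgroup G}
    (hH : (stabilizer (Perm α) e).comap φ = H) (htrans : ∀ x, ∃ g, φ g e = x) (g : G) :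
    quotientEquivOfComapStabilizerEq φ hH htrans g = φ g e := rfl

def permOfQuotientEquiv {H : Subgroup G} (ψ : G ⧸ H ≃ α) : G →* Perm α :=
  ψ.permCongrHom.toMonoidHom.comp (MulAction.toPermHom G (G ⧸ H))

lemma permOfQuotientEquiv_apply {H : Subgroup G} (ψ : G ⧸ H ≃ α) (g : G) (x : α) :
    permOfQuotientEquiv ψ g x = ψ (g • ψ.symm x) := rfl

lemma permOfQuotientEquiv_apply_mk {H : Subgroup G} (ψ : G ⧸ H ≃ α) (g h : G) :
    permOfQuotientEquiv ψ g (ψ h) = ψ (g * h : G) := by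
  rw [permOfQuotientEquiv_apply, symm_apply_apply, MulAction.Quotient.smul_mk, smul_eq_mul]

lemma comap_stabilizer_permOfQuotientEquiv {H : Subgroup G} (ψ : G ⧸ H ≃ α) :
    (stabilizer (Perm α) (ψ (1 : G))).comap (permOfQuotientEquiv ψ) = H := by
  ext g
  rw [mem_comap_stabilizer_iff, permOfQuotientEquiv_apply_mk, mul_one, ψ.apply_eq_iff_eq,
    QuotientGroup.eq, mul_one, inv_mem_iff]

lemma permOfQuotientEquiv_transitive {H : Subgroup G} (ψ : G ⧸ H ≃ α) (x y : α) :
    ∃ g, permOfQuotientEquiv ψ g x = y := by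
  obtain ⟨a, ha⟩ := QuotientGroup.mk_surjective (ψ.symm x)
  obtain ⟨b, hb⟩ := QuotientGroup.mk_surjective (ψ.symm y)
  refine ⟨b * a⁻¹, ?_⟩
  rw [permOfQuotientEquiv_apply, ← ha, MulAction.Quotient.smul_mk, smul_eq_mul,
    inv_mul_cancel_right, hb, apply_symm_apply]

variable (α) in
noncomputable def transitiveHomFiberEquiv (e : α) (H : Subgroup G) :
    {φ : {φ : G →* Perm α // ∀ x y, ∃ g, φ g x = y} //
      (stabilizer (Perm α) e).comap φ.1 = H} ≃ {ψ : G ⧸ H ≃ α // ψ (1 : G) = e} where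
  toFun φ := ⟨quotientEquivOfComapStabilizerEq φ.1.1 φ.2 (φ.1.2 e), by
    rw [quotientEquivOfComapStabilizerEq_mk, map_one, Perm.one_apply]⟩
  invFun ψ := ⟨⟨permOfQuotientEquiv ψ.1, permOfQuotientEquiv_transitive ψ.1⟩,
    by obtain ⟨ψ, rfl⟩ := ψ; exact comap_stabilizer_permOfQuotientEquiv ψ⟩
  left_inv φ := by
    refine Subtype.ext (Subtype.ext (MonoidHom.ext fun g => Equiv.ext fun x => ?_))
    obtain ⟨h, rfl⟩ := φ.1.2 e x
    exact (permOfQuotientEquiv_apply_mk _ g h).trans (by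
      rw [quotientEquivOfComapStabilizerEq_mk, map_mul, Perm.mul_apply])
  right_inv := by
    rintro ⟨ψ, rfl⟩
    refine Subtype.ext (Equiv.ext fun c => ?_)
    obtain ⟨g, rfl⟩ := QuotientGroup.mk_surjective c
    exact (permOfQuotientEquiv_apply_mk ψ g 1).trans (by rw [mul_one])

lemma exists_quotientEquiv_apply_one_eq {β : Type*} [Finite β] {H : Subgroup G}
    (h : H.index = Nat.card β) (b : β) : ∃ f : G ⧸ H ≃ β, f (1 : G) = b := by
  classical
  have : Finite (G ⧸ H) := Nat.finite_of_card_ne_zero (by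
    rw [← Subgroup.index_eq_card, h]; exact Nat.card_ne_zero.mpr ⟨⟨b⟩, inferInstance⟩)
  obtain ⟨f⟩ := Finite.card_eq.mp (H.index_eq_card ▸ h)
  exact ⟨f.trans (swap (f (1 : G)) b), swap_apply_left _ _⟩

theorem card_transitive_homs [Finite α] [Nonempty α] :
    Nat.card {φ : G →* Perm α // ∀ x y, ∃ g, φ g x = y} =
      (Nat.card α - 1).factorial * Nat.card {H : Subgroup G // H.index = Nat.card α} := by
  let e := Classical.arbitrary α
  let stab : {φ : G →* Perm α // ∀ x y, ∃ g, φ g x = y} →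
      {H : Subgroup G // H.index = Nat.card α} :=
    fun φ => ⟨_, (Subgroup.index_eq_card _).trans
      (Nat.card_congr (quotientEquivOfComapStabilizerEq φ.1 rfl (φ.2 e)))⟩
  rw [Nat.card_eq_card_mul_of_fiber_equiv stab (C := {π : Perm α // π e = e}), mul_comm,
    Perm.card_fixing]
  intro H
  obtain ⟨f, hf⟩ := exists_quotientEquiv_apply_one_eq H.2 e
  refine ⟨(subtypeEquivRight fun φ => Subtype.ext_iff).trans
    ((transitiveHomFiberEquiv α e H.1).trans ?_)⟩
  exact (f.equivCongr (Equiv.refl α)).subtypeEquiv fun ψ => by simp [← hf]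

lemma card_orbitRel_quotient_range_eq_one_iff [Nonempty α] (φ : G →* Perm α) :
    Nat.card (orbitRel.Quotient φ.range α) = 1 ↔ ∀ x y, ∃ g, φ g x = y := by
  have : Nonempty (orbitRel.Quotient φ.range α) := Nonempty.map (Quotient.mk _) ‹_›
  rw [Nat.card_eq_one_iff_unique, and_iff_left this, ← pretransitive_iff_subsingleton_quotient,
    isPretransitive_iff]
  simp [Perm.smul_def]

end TransitiveHom

section CommutingTuples

variable {ι M : Type*} [DecidableEq ι] [Group M]

lemma commute_iff_pairwise_commute_zpowersHom (σ : ι → M) :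
    (∀ i j, Commute (σ i) (σ j)) ↔
      Pairwise fun i j => ∀ x y, Commute (zpowersHom M (σ i) x) (zpowersHom M (σ j) y) := by
  refine ⟨fun h i j _ x y => (h i j).zpow_zpow _ _, fun h i j => ?_⟩
  by_cases hij : i = j
  · exact hij ▸ Commute.refl _
  · simpa using h hij (Multiplicative.ofAdd 1) (Multiplicative.ofAdd 1)

variable [Fintype ι]

def commutingTupleEquiv :
    {σ : ι → M // ∀ i j, Commute (σ i) (σ j)} ≃ ((ι → Multiplicative ℤ) →* M) :=
  (subtypeEquiv (piCongrRight fun _ => zpowersHom M)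
    commute_iff_pairwise_commute_zpowersHom).trans MonoidHom.noncommPiCoprodEquiv

lemma range_commutingTupleEquiv (σ : {σ : ι → M // ∀ i j, Commute (σ i) (σ j)}) :
    (commutingTupleEquiv σ).range = Subgroup.closure (Set.range σ.1) := by
  have : ∀ x : M, (zpowersHom M x).range = Subgroup.zpowers x := fun x => by
    ext; simp [Subgroup.mem_zpowers_iff]
  rw [Set.range_eq_iUnion, Subgroup.closure_iUnion]
  simp only [← Subgroup.zpowers_eq_closure, ← this]
  exact MonoidHom.noncommPiCoprod_range
    (hcomm := (commute_iff_pairwise_commute_zpowersHom σ.1).mp σ.2) _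

theorem card_commuting_transitive (α : Type*) [Nonempty α] :
    Nat.card {σ : ι → Perm α // (∀ i j, Commute (σ i) (σ j)) ∧
      Nat.card (orbitRel.Quotient (Subgroup.closure (Set.range σ)) α) = 1} =
      Nat.card {φ : (ι → Multiplicative ℤ) →* Perm α // ∀ x y, ∃ g, φ g x = y} :=
  Nat.card_congr ((subtypeSubtypeEquivSubtypeInter _ _).symm.trans
    (commutingTupleEquiv.subtypeEquiv fun σ => by
      rw [← card_orbitRel_quotient_range_eq_one_iff, range_commutingTupleEquiv]))

end CommutingTuples

@[to_additive]
def MulEquiv.subgroupWithIndexCongr {G G' : Type*} [Group G] [Group G'] (e : G ≃* G')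
    (P : ℕ → Prop) : {H : Subgroup G // P H.index} ≃ {H : Subgroup G' // P H.index} :=
  e.mapSubgroup.toEquiv.subtypeEquiv fun H => by simp

lemma card_subgroups_pi_multiplicative_int (p n : ℕ) :
    Nat.card {H : Subgroup (Fin p → Multiplicative ℤ) // H.index = n} =
      Nat.card {L : AddSubgroup (Fin p → ℤ) // L.index = n} :=
  Nat.card_congr
    ((toSubgroup.toEquiv.subtypeEquiv (q := fun H => H.index = n) fun _ => Iff.rfl).trans
    ((MulEquiv.funMultiplicative _ _).subgroupWithIndexCongr (· = n))).symm

lemma AddSubgroup.index_eq_index_comap_mul_index_map {K G Q : Type*} [AddGroup K]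
    [AddCommGroup G] [AddGroup Q] {i : K →+ G} {f : G →+ Q} (hexact : i.range = f.ker)
    (hf : Function.Surjective f) (L : AddSubgroup G) :
    L.index = (L.comap i).index * (L.map f).index := by
  rw [index_comap, hexact, index_map, AddMonoidHom.range_eq_top.mpr hf, index_top, mul_one,
    ← relIndex_sup_right (H := f.ker) (K := L), sup_comm, relIndex_mul_index le_sup_left]

lemma AddMonoidHom.range_inr_eq_ker_fst {A B : Type*} [AddGroup A] [AddGroup B] :
    (AddMonoidHom.inr A B).range = (AddMonoidHom.fst A B).ker := by
  ext ⟨a, b⟩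
  simp [AddMonoidHom.ker_fst, AddSubgroup.mem_prod, eq_comm]

lemma AddSubgroup.finite_quotient_of_index_dvd {G : Type*} [AddGroup G] {M : AddSubgroup G}
    {n : ℕ} (hn : n ≠ 0) (hM : M.index ∣ n) : Finite (G ⧸ M) :=
  Nat.finite_of_card_ne_zero (by rw [← index_eq_card]; exact ne_zero_of_dvd_ne_zero hn hM)

lemma sum_dvd_eq_sum_divisors_mul_card {X : Type*} (f : X → ℕ) {n : ℕ} (hn : n ≠ 0)
    [Fintype {x // f x ∣ n}] :
    ∑ x : {x // f x ∣ n}, f x = ∑ s ∈ n.divisors, s * Nat.card {x // f x = s} := by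
  classical
  rw [← Finset.sum_fiberwise_of_maps_to (g := fun x => f x.1) (t := n.divisors)
    (fun x _ => Nat.mem_divisors.mpr ⟨x.2, hn⟩)]
  refine Finset.sum_congr rfl fun s hs => ?_
  rw [Finset.sum_congr rfl fun x hx => (Finset.mem_filter.mp hx).2, Finset.sum_const,
    smul_eq_mul, mul_comm, ← Fintype.card_subtype, Fintype.card_eq_nat_card,
    Nat.card_congr (Equiv.subtypeSubtypeEquivSubtype (p := fun x => f x ∣ n)
      (q := fun x => f x = s) fun hx => hx ▸ Nat.dvd_of_mem_divisors hs)]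

section Extension

variable {V : Type*} [AddCommGroup V]

lemma index_eq_index_comap_inr_mul (L : AddSubgroup (ℤ × V)) {g : ℤ}
    (hg : L.map (AddMonoidHom.fst ℤ V) = zmultiples g) :
    L.index = (L.comap (AddMonoidHom.inr ℤ V)).index * g.natAbs := by
  rw [index_eq_index_comap_mul_index_map AddMonoidHom.range_inr_eq_ker_fst Prod.fst_surjective,
    hg,
    Int.index_zmultiples]

def extension (M : AddSubgroup V) (e : ℤ) (c : V ⧸ M) : AddSubgroup (ℤ × V) :=
  (zmultiples (e, c)).comap ((AddMonoidHom.id ℤ).prodMap (QuotientAddGroup.mk' M))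

variable {M : AddSubgroup V} {e : ℤ}

lemma mem_extension {c : V ⧸ M} {y : ℤ × V} :
    y ∈ extension M e c ↔ ∃ k : ℤ, k * e = y.1 ∧ k • c = y.2 := by
  simp [extension, mem_zmultiples_iff, Prod.ext_iff]

lemma comap_inr_extension (he : e ≠ 0) (c : V ⧸ M) :
    (extension M e c).comap (AddMonoidHom.inr ℤ V) = M := by
  ext v
  simp [mem_extension, he, eq_comm (b := (v : V ⧸ M))]

lemma map_fst_extension (c : V ⧸ M) :
    (extension M e c).map (AddMonoidHom.fst ℤ V) = zmultiples e := by
  ext t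
  obtain ⟨x, rfl⟩ := QuotientAddGroup.mk_surjective c
  simp only [mem_map, mem_extension, AddMonoidHom.coe_fst, Int.mem_zmultiples_iff]
  constructor
  · rintro ⟨y, ⟨k, hk, -⟩, rfl⟩
    exact ⟨k, by rw [← hk, mul_comm]⟩
  · rintro ⟨k, rfl⟩
    exact ⟨(e * k, k • x), ⟨k, mul_comm _ _, by simp⟩, rfl⟩

lemma index_extension (he : e ≠ 0) (c : V ⧸ M) :
    (extension M e c).index = M.index * e.natAbs := by
  rw [index_eq_index_comap_inr_mul _ (map_fst_extension c), comap_inr_extension he]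

lemma extension_injective (he : e ≠ 0) : Function.Injective (extension M e) := by
  intro c c' h
  obtain ⟨x, rfl⟩ := QuotientAddGroup.mk_surjective c
  have hx : ((e, x) : ℤ × V) ∈ extension M e x := mem_extension.mpr ⟨1, by simp⟩
  obtain ⟨k, hk, hkc⟩ := mem_extension.mp (h ▸ hx)
  rw [mul_eq_right₀ he] at hk
  rw [← hkc, hk, one_smul]

lemma eq_extension {L : AddSubgroup (ℤ × V)} (hM : L.comap (AddMonoidHom.inr ℤ V) = M)
    (he : L.map (AddMonoidHom.fst ℤ V) = zmultiples e) {x : V} (hx : ((e, x) : ℤ × V) ∈ L) :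
    L = extension M e x := by
  have mem_M : ∀ v, (0, v) ∈ L ↔ v ∈ M := fun v => by rw [← hM]; rfl
  ext ⟨t, v⟩
  rw [mem_extension]
  constructor
  · intro hy
    obtain ⟨k, rfl⟩ : e ∣ t := by
      rw [← Int.mem_zmultiples_iff, ← he]
      exact mem_map_of_mem _ hy
    refine ⟨k, mul_comm _ _, ?_⟩
    have : (0, v - k • x) ∈ L := by
      simpa [mul_comm] using sub_mem hy (zsmul_mem hx k)
    rw [← QuotientAddGroup.mk_zsmul, eq_comm, QuotientAddGroup.eq_iff_sub_mem]
    exact (mem_M _).mp this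
  · rintro ⟨k, rfl, hk⟩
    rw [← QuotientAddGroup.mk_zsmul, eq_comm, QuotientAddGroup.eq_iff_sub_mem] at hk
    simpa using add_mem (zsmul_mem hx k) ((mem_M _).mpr hk)

lemma natCast_div_index_ne_zero {n : ℕ} (hn : n ≠ 0) (hM : M.index ∣ n) :
    ((n / M.index : ℕ) : ℤ) ≠ 0 := fun h =>
  hn (by rw [← Nat.mul_div_cancel' hM, Int.natCast_eq_zero.mp h, mul_zero])

lemma index_extension_div {n : ℕ} (hn : n ≠ 0) (hM : M.index ∣ n) (c : V ⧸ M) :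
    (extension M (n / M.index : ℕ) c).index = n := by
  rw [index_extension (natCast_div_index_ne_zero hn hM), Int.natAbs_natCast,
    Nat.mul_div_cancel' hM]

lemma exists_eq_extension {n : ℕ} (hn : n ≠ 0) {L : AddSubgroup (ℤ × V)} (hL : L.index = n)
    (hM : L.comap (AddMonoidHom.inr ℤ V) = M) :
    M.index ∣ n ∧ ∃ x : V, L = extension M (n / M.index : ℕ) x := by
  obtain ⟨g, hg⟩ := Int.subgroup_cyclic (L.map (AddMonoidHom.fst ℤ V))
  rw [← zmultiples_eq_closure, ← Int.zmultiples_natAbs] at hg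
  have hidx := index_eq_index_comap_inr_mul L hg
  rw [Int.natAbs_natCast, hL, hM] at hidx
  have hdvd : M.index ∣ n := ⟨_, hidx⟩
  have he : n / M.index = g.natAbs := by
    rw [hidx, Nat.mul_div_cancel_left _ (Nat.pos_of_ne_zero (ne_zero_of_dvd_ne_zero hn hdvd))]
  obtain ⟨⟨t, x⟩, hx, ht⟩ : (g.natAbs : ℤ) ∈ L.map (AddMonoidHom.fst ℤ V) :=
    hg ▸ mem_zmultiples _
  obtain rfl : t = g.natAbs := ht
  exact ⟨hdvd, x, he ▸ eq_extension hM hg hx⟩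

variable (V) in
noncomputable def extensionEquiv {n : ℕ} (hn : n ≠ 0) :
    (Σ M : {M : AddSubgroup V // M.index ∣ n}, V ⧸ M.1) ≃
      {L : AddSubgroup (ℤ × V) // L.index = n} :=
  Equiv.ofBijective
    (fun Mc => ⟨extension Mc.1.1 (n / Mc.1.1.index : ℕ) Mc.2,
      index_extension_div hn Mc.1.2 _⟩)
    ⟨by
      rintro ⟨⟨M, hM⟩, c⟩ ⟨⟨M', hM'⟩, c'⟩ h
      have hL := congrArg Subtype.val h
      obtain rfl : M = M' := by
        simpa only [comap_inr_extension (natCast_div_index_ne_zero hn hM),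
          comap_inr_extension (natCast_div_index_ne_zero hn hM')]
          using congrArg (comap (AddMonoidHom.inr ℤ V)) hL
      obtain rfl := extension_injective (natCast_div_index_ne_zero hn hM) hL
      rfl,
    by
      rintro ⟨L, hL⟩
      obtain ⟨hM, x, hLx⟩ := exists_eq_extension hn hL rfl
      exact ⟨⟨⟨_, hM⟩, x⟩, Subtype.ext hLx.symm⟩⟩

lemma card_addSubgroups_prod_int {n : ℕ} (hn : n ≠ 0)
    [Finite {M : AddSubgroup V // M.index ∣ n}] :
    Nat.card {L : AddSubgroup (ℤ × V) // L.index = n} =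
      ∑ s ∈ n.divisors, s * Nat.card {M : AddSubgroup V // M.index = s} := by
  have := Fintype.ofFinite {M : AddSubgroup V // M.index ∣ n}
  have := fun M : {M : AddSubgroup V // M.index ∣ n} => finite_quotient_of_index_dvd hn M.2
  rw [← Nat.card_congr (extensionEquiv V hn), Nat.card_sigma]
  simp_rw [← index_eq_card]
  exact sum_dvd_eq_sum_divisors_mul_card index hn

lemma finite_addSubgroups_prod_int {n : ℕ} (hn : n ≠ 0)
    [Finite {M : AddSubgroup V // M.index ∣ n}] :
    Finite {L : AddSubgroup (ℤ × V) // L.index ∣ n} := by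
  have hfin : ∀ d ∈ n.divisors, {L : AddSubgroup (ℤ × V) | L.index = d}.Finite := by
    intro d hd
    obtain ⟨hdn, -⟩ := Nat.mem_divisors.mp hd
    have hd0 := ne_zero_of_dvd_ne_zero hn hdn
    have : Finite {M : AddSubgroup V // M.index ∣ d} :=
      Finite.of_injective
        (fun M => (⟨M.1, M.2.trans hdn⟩ : {M : AddSubgroup V // M.index ∣ n}))
        fun M M' h => by simpa [Subtype.ext_iff] using h
    have := fun M : {M : AddSubgroup V // M.index ∣ d} => finite_quotient_of_index_dvd hd0 M.2
    exact Set.finite_coe_iff.mp (Finite.of_equiv _ (extensionEquiv V hd0))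
  have hunion :
      {L : AddSubgroup (ℤ × V) | L.index ∣ n} = ⋃ d ∈ n.divisors, {L | L.index = d} := by
    ext L
    simp [hn]
  exact (hunion ▸ n.divisors.finite_toSet.biUnion hfin).to_subtype

end Extension

lemma card_addSubgroups_index_of_subsingleton {G : Type*} [AddGroup G] [Subsingleton G]
    (s : ℕ) : Nat.card {L : AddSubgroup G // L.index = s} = if s = 1 then 1 else 0 := by
  have hL : ∀ L : AddSubgroup G, L.index = 1 := fun L => index_eq_one.mpr (Subsingleton.elim _ _)
  split_ifs with h <;> simp [hL, h, eq_comm]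

lemma finite_addSubgroups_pi_int (q : ℕ) {n : ℕ} (hn : n ≠ 0) :
    Finite {L : AddSubgroup (Fin q → ℤ) // L.index ∣ n} := by
  induction q with
  | zero => infer_instance
  | succ q ih =>
    have := finite_addSubgroups_prod_int (V := Fin q → ℤ) hn
    exact .of_equiv _
      ((Fin.consLinearEquiv ℤ fun _ => ℤ).toAddEquiv.addSubgroupWithIndexCongr (· ∣ n))

lemma card_addSubgroups_pi_int_succ (q : ℕ) {n : ℕ} (hn : n ≠ 0) :
    Nat.card {L : AddSubgroup (Fin (q + 1) → ℤ) // L.index = n} =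
      ∑ s ∈ n.divisors, s * Nat.card {M : AddSubgroup (Fin q → ℤ) // M.index = s} := by
  have := finite_addSubgroups_pi_int q hn
  rw [← Nat.card_congr
    ((Fin.consLinearEquiv ℤ fun _ => ℤ).toAddEquiv.addSubgroupWithIndexCongr (· = n))]
  exact card_addSubgroups_prod_int hn

section DivisorChains

open Finset

def divisorChains (q n : ℕ) : Finset (Fin q → ℕ) :=
  {s ∈ Fintype.piFinset fun _ => n.divisors |
    ∀ i : Fin q, s i ∣ if h : i.val + 1 < q then s ⟨i.val + 1, h⟩ else n}

lemma B_succ_eq (q n : ℕ) : B (q + 1) n = ∑ s ∈ divisorChains q n, ∏ i, s i := rfl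

lemma dvd_last_of_chain {q : ℕ} {f : Fin (q + 1) → ℕ}
    (h : ∀ i : Fin q, f i.castSucc ∣ f i.succ) (i : Fin (q + 1)) : f i ∣ f (Fin.last q) := by
  induction i using Fin.reverseInduction with
  | last => rfl
  | cast i ih => exact (h i).trans ih

lemma dite_succ_eq_snoc {q : ℕ} (s : Fin q → ℕ) (n : ℕ) (i : Fin q) :
    (if h : i.val + 1 < q then s ⟨i.val + 1, h⟩ else n) =
      (Fin.snoc s n : Fin (q + 1) → ℕ) i.succ := by
  simp [Fin.snoc, Fin.castLT]

lemma mem_divisorChains_iff {q n : ℕ} (hn : n ≠ 0) {s : Fin q → ℕ} :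
    s ∈ divisorChains q n ↔
      ∀ i : Fin q,
        (Fin.snoc s n : Fin (q + 1) → ℕ) i.castSucc ∣ (Fin.snoc s n : Fin (q + 1) → ℕ) i.succ := by
  simp only [divisorChains, mem_filter, Fintype.mem_piFinset, Nat.mem_divisors,
    dite_succ_eq_snoc, Fin.snoc_castSucc]
  refine ⟨And.right, fun h => ⟨fun i => ⟨?_, hn⟩, h⟩⟩
  simpa using dvd_last_of_chain (f := Fin.snoc s n) (by simpa using h) i.castSucc

lemma mem_divisorChains_succ_iff {q n : ℕ} (hn : n ≠ 0) {s : Fin (q + 1) → ℕ} :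
    s ∈ divisorChains (q + 1) n ↔
      s (Fin.last q) ∈ n.divisors ∧ Fin.init s ∈ divisorChains q (s (Fin.last q)) := by
  rw [mem_divisorChains_iff hn, Fin.forall_fin_succ', Nat.mem_divisors]
  simp only [Fin.snoc_castSucc, Fin.succ_last, Fin.snoc_last, Fin.succ_castSucc]
  constructor
  · rintro ⟨h, hlast⟩
    have hs : s (Fin.last q) ≠ 0 := ne_zero_of_dvd_ne_zero hn hlast
    rw [mem_divisorChains_iff hs, Fin.snoc_init_self]
    exact ⟨⟨hlast, hn⟩, h⟩
  · rintro ⟨⟨hlast, -⟩, h⟩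
    rw [mem_divisorChains_iff (ne_zero_of_dvd_ne_zero hn hlast), Fin.snoc_init_self] at h
    exact ⟨h, hlast⟩

lemma B_one (n : ℕ) : B 1 n = 1 := by
  rw [B_succ_eq]
  simp [divisorChains]

lemma B_succ_succ {q n : ℕ} (hn : n ≠ 0) :
    B (q + 2) n = ∑ m ∈ n.divisors, m * B (q + 1) m := by
  simp only [B_succ_eq, mul_sum]
  rw [sum_sigma']
  refine sum_equiv ((Fin.snocEquiv _).symm.trans (Equiv.sigmaEquivProd _ _).symm) ?_ ?_
  · intro s
    simp [mem_divisorChains_succ_iff hn]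
  · intro s _
    simp [Fin.prod_univ_castSucc, Fin.init, mul_comm]

end DivisorChains

theorem card_addSubgroups_pi_int_eq_B (q : ℕ) {n : ℕ} (hn : n ≠ 0) :
    Nat.card {L : AddSubgroup (Fin (q + 1) → ℤ) // L.index = n} = B (q + 1) n := by
  induction q generalizing n with
  | zero =>
    rw [card_addSubgroups_pi_int_succ 0 hn, B_one,
      Finset.sum_congr rfl fun s _ => by rw [card_addSubgroups_index_of_subsingleton]]
    simp [hn]
  | succ q ih =>
    rw [card_addSubgroups_pi_int_succ (q + 1) hn, B_succ_succ hn]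
    exact Finset.sum_congr rfl fun s hs => by rw [ih (Nat.ne_of_gt (Nat.pos_of_mem_divisors hs))]

theorem stmt7 (p n : ℕ) (hp : 1 ≤ p) (hn : 1 ≤ n) :
    A p n 1 = (n - 1).factorial * B p n := by
  obtain ⟨q, rfl⟩ : ∃ q, p = q + 1 := ⟨p - 1, by omega⟩
  have : Nonempty (Fin n) := ⟨⟨0, hn⟩⟩
  rw [A, card_commuting_transitive, card_transitive_homs, Nat.card_fin,
    card_subgroups_pi_multiplicative_int, card_addSubgroups_pi_int_eq_B q (by omega)]
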